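/- arXiv:1805.12333 — 6 statements merged into one kernel-verified Lean document; each statement's English description precedes it below -/
import Mathlib

section
/- Let P_X be a probability distribution on a nonempty finite set 𝒳 with P_X(x) > 0 for all x, and let E0 > 0, R_s ≥ 0, R_w ≥ 0 be real numbers. Define the false-accept exponent E_FA(R_w, R_s) = min over all probability distributions Q_X on 𝒳 of [ D(Q_X‖P_X) + min{ R_s, [H_Q(X) − R_w]_+ } ], and define R_w*(E0) = min over all probability distributions Q_X on 𝒳 with D(Q_X‖P_X) ≤ E0 of [ Σ_x Q_X(x) ln(1/P_X(x)) ] − E0. Then E_FA(R_w, R_s) ≥ E0 if and only if R_s ≥ E0 and R_w ≤ R_w*(E0). -/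
/-!
Write `H(Q) = L(Q) - D(Q‖P)` with the cross entropy `L(Q) = Σ Q ln (1/P)`. Where `D ≥ E0` the bound
`D + min {R_s, [H - R_w]_+} ≥ E0` holds automatically once `R_s ≥ E0`; where `D < E0` it amounts to
`R_s ≥ E0` and `L(Q) ≥ E0 + R_w`. Taking `Q = P` forces `R_s ≥ E0`. The condition on `{D < E0}`
extends to `{D ≤ E0}`, i.e. to `R_w ≤ R_w*(E0)`, because mixing `Q` with `P` makes `D` strictly
smaller (convexity of `D`) while moving `L` continuously.
-/

open Finset

/-- A probability distribution on a finite set: nonnegative and summing to 1. -/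
def IsProb {α : Type*} [Fintype α] (Q : α → ℝ) : Prop :=
  (∀ a, 0 ≤ Q a) ∧ ∑ a, Q a = 1

/-- Kullback–Leibler divergence `D(Q‖P) = Σ_a Q(a) ln(Q(a)/P(a))`
(with the convention `0 · ln(0/p) = 0`, automatic since `Real.log 0 = 0`
and the term is multiplied by `Q a = 0`). -/
noncomputable def KL {α : Type*} [Fintype α] (Q P : α → ℝ) : ℝ :=
  ∑ a, Q a * Real.log (Q a / P a)

/-- Shannon entropy `H_Q(X) = -Σ_x Q(x) ln Q(x)` (with `0 ln 0 = 0`). -/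
noncomputable def entropy {α : Type*} [Fintype α] (Q : α → ℝ) : ℝ :=
  -∑ a, Q a * Real.log (Q a)

/-- The 𝒳-marginal of a joint distribution on `𝒳 × 𝒴`. -/
noncomputable def margX {𝒳 𝒴 : Type*} [Fintype 𝒴] (Q : 𝒳 × 𝒴 → ℝ) : 𝒳 → ℝ :=
  fun x => ∑ y, Q (x, y)

/-- The 𝒴-marginal of a joint distribution on `𝒳 × 𝒴`. -/
noncomputable def margY {𝒳 𝒴 : Type*} [Fintype 𝒳] (Q : 𝒳 × 𝒴 → ℝ) : 𝒴 → ℝ :=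
  fun y => ∑ x, Q (x, y)

/-- Conditional entropy `H_Q(X|Y) = -Σ_{x,y} Q(x,y) ln(Q(x,y)/Q_Y(y))` (with `0 ln 0 = 0`). -/
noncomputable def condEnt {𝒳 𝒴 : Type*} [Fintype 𝒳] [Fintype 𝒴] (Q : 𝒳 × 𝒴 → ℝ) : ℝ :=
  -∑ x, ∑ y, Q (x, y) * Real.log (Q (x, y) / margY Q y)

open Filter Topology Real

noncomputable def crossEntropy {α : Type*} [Fintype α] (Q P : α → ℝ) : ℝ :=
  ∑ a, Q a * log (1 / P a)

section Divergence

variable {α : Type*} [Fintype α] {Q R P : α → ℝ}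

lemma IsProb.convexComb (hQ : IsProb Q) (hR : IsProb R) {s t : ℝ} (hs : 0 ≤ s) (ht : 0 ≤ t)
    (hst : s + t = 1) : IsProb fun a => s * Q a + t * R a := by
  refine ⟨fun a => by have := hQ.1 a; have := hR.1 a; positivity, ?_⟩
  rw [sum_add_distrib, ← mul_sum, ← mul_sum, hQ.2, hR.2, mul_one, mul_one, hst]

lemma crossEntropy_nonneg (hQ : ∀ a, 0 ≤ Q a) (hP : IsProb P) (hPpos : ∀ a, 0 < P a) :
    0 ≤ crossEntropy Q P := by
  refine sum_nonneg fun a _ => mul_nonneg (hQ a) (log_nonneg ?_)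
  exact one_le_one_div (hPpos a) (hP.2 ▸ single_le_sum (fun b _ => hP.1 b) (mem_univ a))

lemma crossEntropy_convexComb (s t : ℝ) :
    crossEntropy (fun a => s * Q a + t * R a) P = s * crossEntropy Q P + t * crossEntropy R P := by
  simp only [crossEntropy, mul_sum, ← sum_add_distrib]
  exact sum_congr rfl fun a _ => by ring

lemma KL_eq_crossEntropy_sub_entropy (hPpos : ∀ a, 0 < P a) :
    KL Q P = crossEntropy Q P - entropy Q := by
  simp only [KL, crossEntropy, entropy, sub_neg_eq_add, ← sum_add_distrib]
  refine sum_congr rfl fun a _ => ?_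
  rcases eq_or_ne (Q a) 0 with h | h
  · simp [h]
  · rw [log_div h (hPpos a).ne', one_div, log_inv]
    ring

lemma KL_self (hPpos : ∀ a, 0 < P a) : KL P P = 0 :=
  sum_eq_zero fun a _ => by rw [div_self (hPpos a).ne', log_one, mul_zero]

lemma KL_nonneg (hQ : IsProb Q) (hP : IsProb P) (hPpos : ∀ a, 0 < P a) : 0 ≤ KL Q P := by
  have hterm (a : α) :
      Q a * log (Q a / P a) = P a * InformationTheory.klFun (Q a / P a) + (Q a - P a) := by
    have := (hPpos a).ne'
    rw [InformationTheory.klFun_apply]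
    field_simp
    ring
  rw [KL, sum_congr rfl fun a _ => hterm a, sum_add_distrib, sum_sub_distrib, hQ.2, hP.2, sub_self,
    add_zero]
  exact sum_nonneg fun a _ => mul_nonneg (hPpos a).le
    (InformationTheory.klFun_nonneg (div_nonneg (hQ.1 a) (hPpos a).le))

lemma entropy_convexComb_ge (hQ : ∀ a, 0 ≤ Q a) (hR : ∀ a, 0 ≤ R a) {s t : ℝ} (hs : 0 ≤ s)
    (ht : 0 ≤ t) (hst : s + t = 1) :
    s * entropy Q + t * entropy R ≤ entropy fun a => s * Q a + t * R a := by
  simp only [entropy, mul_neg, ← neg_add, neg_le_neg_iff, mul_sum, ← sum_add_distrib]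
  refine sum_le_sum fun a _ => ?_
  simpa only [smul_eq_mul, mul_assoc] using
    convexOn_mul_log.2 (Set.mem_Ici.2 (hQ a)) (Set.mem_Ici.2 (hR a)) hs ht hst

lemma KL_convexComb_le (hQ : ∀ a, 0 ≤ Q a) (hR : ∀ a, 0 ≤ R a) (hPpos : ∀ a, 0 < P a) {s t : ℝ}
    (hs : 0 ≤ s) (ht : 0 ≤ t) (hst : s + t = 1) :
    KL (fun a => s * Q a + t * R a) P ≤ s * KL Q P + t * KL R P := by
  simp only [KL_eq_crossEntropy_sub_entropy hPpos, crossEntropy_convexComb]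
  linarith [entropy_convexComb_ge hQ hR hs ht hst]

end Divergence

lemma le_csInf_setOf_iff {ι : Type*} {p : ι → Prop} {f : ι → ℝ} {b c : ℝ} (hne : ∃ i, p i)
    (hb : ∀ i, p i → b ≤ f i) :
    c ≤ sInf {v | ∃ i, p i ∧ v = f i} ↔ ∀ i, p i → c ≤ f i := by
  have hbdd : BddBelow {v | ∃ i, p i ∧ v = f i} := ⟨b, by rintro _ ⟨i, hi, rfl⟩; exact hb i hi⟩
  obtain ⟨i₀, hi₀⟩ := hne
  rw [le_csInf_iff hbdd ⟨f i₀, i₀, hi₀, rfl⟩]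
  exact ⟨fun h i hi => h _ ⟨i, hi, rfl⟩, by rintro h _ ⟨i, hi, rfl⟩; exact h i hi⟩

lemma le_add_min_max_sub_iff {E Rs Rw d ℓ : ℝ} (hd : 0 ≤ d) (hRs : E ≤ Rs) :
    E ≤ d + min Rs (max (ℓ - d - Rw) 0) ↔ (d < E → E + Rw ≤ ℓ) := by
  rcases le_or_gt E d with hEd | hdE
  · simp only [not_lt.2 hEd, false_imp_iff, iff_true]
    rcases min_choice Rs (max (ℓ - d - Rw) 0) with h | h <;> rw [h]
    · linarith
    · linarith [le_max_right (ℓ - d - Rw) 0]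
  · simp only [hdE, true_imp_iff, ← sub_le_iff_le_add', le_min_iff, le_max_iff]
    constructor
    · rintro ⟨-, h | h⟩ <;> linarith
    · intro h; exact ⟨by linarith, Or.inl (by linarith)⟩

lemma le_crossEntropy_of_KL_le {α : Type*} [Fintype α] {P Q : α → ℝ} (hP : IsProb P)
    (hPpos : ∀ a, 0 < P a) {c E : ℝ} (hE : 0 < E)
    (h : ∀ Q, IsProb Q → KL Q P < E → c ≤ crossEntropy Q P) (hQ : IsProb Q) (hKL : KL Q P ≤ E) :
    c ≤ crossEntropy Q P := by
  have hlim : Tendsto (fun t : ℝ => crossEntropy (fun a => (1 - t) * Q a + t * P a) P)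
      (𝓝[>] 0) (𝓝 (crossEntropy Q P)) := by
    simp only [crossEntropy_convexComb]
    refine (Continuous.tendsto' (by fun_prop) 0 _ ?_).mono_left nhdsWithin_le_nhds
    simp only [sub_zero, one_mul, zero_mul, add_zero]
  refine ge_of_tendsto hlim ?_
  filter_upwards [Ioo_mem_nhdsGT one_pos] with t ⟨ht0, ht1⟩
  refine h _ (hQ.convexComb hP (by linarith) ht0.le (by ring)) ?_
  calc KL (fun a => (1 - t) * Q a + t * P a) P ≤ (1 - t) * KL Q P + t * KL P P :=
        KL_convexComb_le hQ.1 hP.1 hPpos (by linarith) ht0.le (by ring)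
    _ = (1 - t) * KL Q P := by rw [KL_self hPpos, mul_zero, add_zero]
    _ < E := by nlinarith

theorem stmt_0_general {𝒳 : Type*} [Fintype 𝒳]
    (P : 𝒳 → ℝ) (hP : IsProb P) (hPpos : ∀ x, 0 < P x)
    (E0 Rs Rw : ℝ) (hE0 : 0 < E0) :
    E0 ≤ sInf {v | ∃ Q : 𝒳 → ℝ, IsProb Q ∧
        v = KL Q P + min Rs (max (entropy Q - Rw) 0)} ↔
      (E0 ≤ Rs ∧
        Rw ≤ sInf {v | ∃ Q : 𝒳 → ℝ, IsProb Q ∧ KL Q P ≤ E0 ∧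
          v = (∑ x, Q x * Real.log (1 / P x)) - E0}) := by
  have hCE : ∀ Q, ∑ x, Q x * log (1 / P x) = crossEntropy Q P := fun _ => rfl
  simp only [← and_assoc, hCE]
  have hFA_bdd (Q : 𝒳 → ℝ) (hQ : IsProb Q) :
      min Rs 0 ≤ KL Q P + min Rs (max (entropy Q - Rw) 0) := by
    linarith [KL_nonneg hQ hP hPpos, min_le_min_left Rs (le_max_right (entropy Q - Rw) 0)]
  have hRw_bdd (Q : 𝒳 → ℝ) (hQ : IsProb Q ∧ KL Q P ≤ E0) : -E0 ≤ crossEntropy Q P - E0 := by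
    linarith [crossEntropy_nonneg hQ.1.1 hP hPpos]
  rw [le_csInf_setOf_iff ⟨P, hP⟩ hFA_bdd,
    le_csInf_setOf_iff ⟨P, hP, by rw [KL_self hPpos]; exact hE0.le⟩ hRw_bdd]
  have hH : ∀ Q, entropy Q = crossEntropy Q P - KL Q P := fun Q => by
    rw [KL_eq_crossEntropy_sub_entropy hPpos]; ring
  simp only [hH]
  constructor
  · intro h
    have hRs : E0 ≤ Rs := by
      have hFA := h P hP
      rw [KL_self hPpos, zero_add] at hFA
      exact hFA.trans (min_le_left _ _)
    refine ⟨hRs, fun Q hQ => ?_⟩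
    have := le_crossEntropy_of_KL_le hP hPpos hE0
      (fun Q' hQ' => (le_add_min_max_sub_iff (KL_nonneg hQ' hP hPpos) hRs).1 (h Q' hQ')) hQ.1 hQ.2
    linarith
  · rintro ⟨hRs, hRw⟩ Q hQ
    refine (le_add_min_max_sub_iff (KL_nonneg hQ hP hPpos) hRs).2 fun hlt => ?_
    have := hRw Q ⟨hQ, hlt.le⟩
    linarith

/-- `E_FA(R_w, R_s) ≥ E0` iff `R_s ≥ E0` and `R_w ≤ R_w*(E0)`. -/
theorem stmt_0 {𝒳 : Type*} [Fintype 𝒳] [Nonempty 𝒳]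
    (P : 𝒳 → ℝ) (hP : IsProb P) (hPpos : ∀ x, 0 < P x)
    (E0 Rs Rw : ℝ) (hE0 : 0 < E0) (hRs : 0 ≤ Rs) (hRw : 0 ≤ Rw) :
    E0 ≤ sInf {v | ∃ Q : 𝒳 → ℝ, IsProb Q ∧
        v = KL Q P + min Rs (max (entropy Q - Rw) 0)} ↔
      (E0 ≤ Rs ∧
        Rw ≤ sInf {v | ∃ Q : 𝒳 → ℝ, IsProb Q ∧ KL Q P ≤ E0 ∧
          v = (∑ x, Q x * Real.log (1 / P x)) - E0}) :=
  stmt_0_general P hP hPpos E0 Rs Rw hE0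
end

section
/- Let P be a probability distribution on a nonempty finite set 𝒳 with P(x) > 0 for all x, and let λ > 0. Then the minimum over all probability distributions Q on 𝒳 of { Σ_x Q(x) ln(1/P(x)) + λ D(Q‖P) } equals −λ ln( Σ_x P(x)^{1+1/λ} ). -/
open Finset

open Real

/-! The functional is `λ D(Q‖Q*) - λ ln Z` for the escort distribution `Q* ∝ P^{1+1/λ}` with
normalizer `Z = Σ_x P(x)^{1+1/λ}`: on the support of `Q`, the terms `-Q ln P` coming from the cross
entropy and from `λ D(Q‖P)` combine to `-λ(1+1/λ) Q ln P = -λ Q ln P^{1+1/λ}`. By Gibbs'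
inequality the minimum is attained at `Q = Q*`, with value `-λ ln Z`. -/

lemma sub_le_mul_log_div {a b : ℝ} (ha : 0 ≤ a) (hb : 0 < b) : a - b ≤ a * log (a / b) := by
  have h := mul_nonneg hb.le (InformationTheory.klFun_nonneg (div_nonneg ha hb.le))
  rw [InformationTheory.klFun_apply] at h
  have expand : b * (a / b * log (a / b) + 1 - a / b) = a * log (a / b) + b - a := by
    field_simp
  linarith

lemma KL_nonneg_s5 {α : Type*} [Fintype α] {Q R : α → ℝ} (hQ : ∀ a, 0 ≤ Q a) (hR : ∀ a, 0 < R a)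
    (hsum : ∑ a, R a ≤ ∑ a, Q a) : 0 ≤ KL Q R :=
  calc 0 ≤ ∑ a, (Q a - R a) := by rw [sum_sub_distrib]; linarith
    _ ≤ KL Q R := sum_le_sum fun a _ => sub_le_mul_log_div (hQ a) (hR a)

lemma KL_self_s5 {α : Type*} [Fintype α] {R : α → ℝ} (hR : ∀ a, 0 < R a) : KL R R = 0 := by
  simp [KL, div_self (hR _).ne']

noncomputable def escort {α : Type*} [Fintype α] (P : α → ℝ) (c : ℝ) : α → ℝ :=
  fun x => P x ^ c / ∑ y, P y ^ c

section Escort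

variable {α : Type*} [Fintype α] [Nonempty α] {P : α → ℝ}

lemma sum_rpow_pos (hP : ∀ x, 0 < P x) (c : ℝ) : 0 < ∑ x, P x ^ c :=
  sum_pos (fun x _ => rpow_pos_of_pos (hP x) c) univ_nonempty

lemma escort_pos (hP : ∀ x, 0 < P x) (c : ℝ) (x : α) : 0 < escort P c x :=
  div_pos (rpow_pos_of_pos (hP x) c) (sum_rpow_pos hP c)

lemma sum_escort (hP : ∀ x, 0 < P x) (c : ℝ) : ∑ x, escort P c x = 1 := by
  simp only [escort, ← sum_div]
  exact div_self (sum_rpow_pos hP c).ne'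

lemma isProb_escort (hP : ∀ x, 0 < P x) (c : ℝ) : IsProb (escort P c) :=
  ⟨fun x => (escort_pos hP c x).le, sum_escort hP c⟩

lemma log_escort (hP : ∀ x, 0 < P x) (c : ℝ) (x : α) :
    log (escort P c x) = c * log (P x) - log (∑ y, P y ^ c) := by
  rw [escort, log_div (rpow_pos_of_pos (hP x) c).ne' (sum_rpow_pos hP c).ne', log_rpow (hP x)]

lemma crossEntropy_add_mul_KL_eq (hP : ∀ x, 0 < P x) {l : ℝ} (hl : l ≠ 0) {Q : α → ℝ}
    (hQ : IsProb Q) :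
    (∑ x, Q x * log (1 / P x)) + l * KL Q P
      = l * KL Q (escort P (1 + 1 / l)) - l * log (∑ x, P x ^ (1 + 1 / l)) := by
  have hlc : l * (1 + 1 / l) = l + 1 := by field_simp
  have pointwise : ∀ x, Q x * log (1 / P x) + l * (Q x * log (Q x / P x))
      = l * (Q x * log (Q x / escort P (1 + 1 / l) x))
        - l * (Q x * log (∑ y, P y ^ (1 + 1 / l))) := by
    intro x
    rcases (hQ.1 x).eq_or_lt with hQx | hQx
    · simp [← hQx]
    · rw [log_div hQx.ne' (escort_pos hP _ x).ne', log_div hQx.ne' (hP x).ne', log_escort hP,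
        one_div, log_inv]
      linear_combination Q x * log (P x) * hlc
  rw [KL, KL, mul_sum, ← sum_add_distrib, sum_congr rfl fun x _ => pointwise x, sum_sub_distrib,
    ← mul_sum, ← mul_sum, ← sum_mul, hQ.2, one_mul]

lemma isLeast_crossEntropy_add_mul_KL (hP : ∀ x, 0 < P x) {l : ℝ} (hl : 0 < l) :
    IsLeast {v | ∃ Q : α → ℝ, IsProb Q ∧ v = (∑ x, Q x * log (1 / P x)) + l * KL Q P}
      (-l * log (∑ x, P x ^ (1 + 1 / l))) := by
  constructor
  · refine ⟨escort P (1 + 1 / l), isProb_escort hP _, ?_⟩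
    rw [crossEntropy_add_mul_KL_eq hP hl.ne' (isProb_escort hP _), KL_self_s5 (escort_pos hP _)]
    ring
  · rintro v ⟨Q, hQ, rfl⟩
    have gibbs : 0 ≤ KL Q (escort P (1 + 1 / l)) :=
      KL_nonneg_s5 hQ.1 (escort_pos hP _) (by rw [sum_escort hP, hQ.2])
    rw [crossEntropy_add_mul_KL_eq hP hl.ne' hQ]
    linarith [mul_nonneg hl.le gibbs]

end Escort

theorem stmt_5_general {𝒳 : Type*} [Fintype 𝒳] [Nonempty 𝒳]
    (P : 𝒳 → ℝ) (hPpos : ∀ x, 0 < P x)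
    (l : ℝ) (hl : 0 < l) :
    sInf {v | ∃ Q : 𝒳 → ℝ, IsProb Q ∧
        v = (∑ x, Q x * Real.log (1 / P x)) + l * KL Q P}
      = -l * Real.log (∑ x, P x ^ (1 + 1 / l)) :=
  (isLeast_crossEntropy_add_mul_KL hPpos hl).csInf_eq

/-- `min_Q { E_Q ln(1/P) + λ D(Q‖P) } = -λ ln Σ_x P(x)^{1+1/λ}`. -/
theorem stmt_5 {𝒳 : Type*} [Fintype 𝒳] [Nonempty 𝒳]
    (P : 𝒳 → ℝ) (hP : IsProb P) (hPpos : ∀ x, 0 < P x)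
    (l : ℝ) (hl : 0 < l) :
    sInf {v | ∃ Q : 𝒳 → ℝ, IsProb Q ∧
        v = (∑ x, Q x * Real.log (1 / P x)) + l * KL Q P}
      = -l * Real.log (∑ x, P x ^ (1 + 1 / l)) :=
  stmt_5_general P hPpos l hl
end

section
/- Let P_XY be a probability distribution on 𝒳×𝒴 with P_XY(x,y) > 0 for all (x,y), with 𝒳-marginal P_X, 𝒴-marginal P_Y, and conditional P_{X|Y}(x|y) = P_XY(x,y)/P_Y(y). Fix λ ∈ [0,1], ρ ≥ 0, and a probability distribution W on 𝒳 with W(x) > 0 for all x. Then the infimum, over all probability distributions Q_Y on 𝒴 and all stochastic kernels Q_{X|Y} (a probability distribution Q_{X|Y}(·|y) on 𝒳 for each y ∈ 𝒴), of { D(Q_Y‖P_Y) + Σ_y Q_Y(y) Σ_x Q_{X|Y}(x|y) [ ln( Q_{X|Y}(x|y)/P_{X|Y}(x|y) ) + (ρ+λ) ln(1/P_X(x)) + λ ln Q_{X|Y}(x|y) + ρ ln W(x) ] } equals −ln( Σ_y [ Σ_x ( P_XY(x,y) · P_X(x)^{ρ+λ} · W(x)^{−ρ} )^{1/(1+λ)}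 ]^{1+λ} ). (All terms of the form 0·ln 0 are interpreted as 0.) -/
open Finset

/-!
The objective is a two-level Gibbs variational problem. For an unnormalized positive weight `c`,
`D(Q‖c) = D(Q‖c / Σ c) - ln Σ c ≥ -ln Σ c`, with equality at `Q = c / Σ c`. For fixed `y` the
bracket is `(1+λ) ln (Q_{X|Y}(x|y) / c_y(x))` for the tilted weight
`c_y(x) = (P_{X|Y}(x|y) P_X(x)^{ρ+λ} W(x)^{-ρ})^{1/(1+λ)}`, so the inner infimum is
`-(1+λ) ln Σ_x c_y(x)`. The outer problem is then `D(Q_Y‖P_Y · (Σ_x c_y)^{1+λ})`, of the same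
form, with value `-ln Σ_y P_Y(y) (Σ_x c_y(x))^{1+λ}`; the factor `P_Y(y)` is absorbed into the
`(1+λ)`-th power.
-/

open Real

lemma sub_le_mul_log_div_s6 {q p : ℝ} (hq : 0 ≤ q) (hp : 0 < p) : q - p ≤ q * log (q / p) := by
  have h := mul_le_mul_of_nonneg_left (self_sub_one_le_mul_log (div_nonneg hq hp.le)) hp.le
  rwa [mul_sub, mul_one, ← mul_assoc, mul_div_cancel₀ q hp.ne'] at h

lemma mul_log_div_add_mul_log_div (q : ℝ) {p d : ℝ} (hp : p ≠ 0) (hd : d ≠ 0) :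
    q * log (q / p) + q * log (p / d) = q * log (q / d) := by
  rcases eq_or_ne q 0 with rfl | hq
  · simp
  rw [← mul_add, ← log_mul (div_ne_zero hq hp) (div_ne_zero hp hd), div_mul_div_cancel₀ hp]

section Gibbs

variable {α : Type*} [Fintype α]

lemma KL_add_sum_mul_log_div (Q : α → ℝ) {P d : α → ℝ} (hP : ∀ a, P a ≠ 0)
    (hd : ∀ a, d a ≠ 0) :
    KL Q P + ∑ a, Q a * log (P a / d a) = KL Q d := by
  rw [KL, KL, ← sum_add_distrib]
  exact sum_congr rfl fun a _ => mul_log_div_add_mul_log_div (Q a) (hP a) (hd a)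

theorem isLeast_KL [Nonempty α] {c : α → ℝ} (hc : ∀ a, 0 < c a) :
    IsLeast {v | ∃ Q, IsProb Q ∧ v = KL Q c} (-log (∑ a, c a)) := by
  set Z := ∑ a, c a
  have hZ : 0 < Z := sum_pos (fun a _ => hc a) univ_nonempty
  have hcZ : ∀ a, 0 < c a / Z := fun a => div_pos (hc a) hZ
  have normalize : ∀ Q : α → ℝ, IsProb Q → KL Q c + log Z = KL Q (fun a => c a / Z) := by
    intro Q hQ
    rw [← KL_add_sum_mul_log_div Q (fun a => (hc a).ne') (fun a => (hcZ a).ne')]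
    simp_rw [div_div_cancel₀ (hc _).ne', ← sum_mul, hQ.2, one_mul]
  have hprob : IsProb fun a => c a / Z :=
    ⟨fun a => (hcZ a).le, by rw [← sum_div, div_self hZ.ne']⟩
  refine ⟨⟨_, hprob, ?_⟩, ?_⟩
  · have hself : KL (fun a => c a / Z) (fun a => c a / Z) = 0 := by
      simp only [KL, div_self (hcZ _).ne', log_one, mul_zero, sum_const_zero]
    linarith [normalize _ hprob]
  · rintro v ⟨Q, hQ, rfl⟩
    have : 0 ≤ KL Q (fun a => c a / Z) :=
      calc 0 = ∑ a, (Q a - c a / Z) := by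
            rw [sum_sub_distrib, hQ.2, ← sum_div, div_self hZ.ne', sub_self]
        _ ≤ _ := sum_le_sum fun a _ => sub_le_mul_log_div_s6 (hQ.1 a) (hcZ a)
    linarith [normalize Q hQ]

end Gibbs

theorem isLeast_KL_add_sum_mul_KL {α β : Type*} [Fintype α] [Nonempty α] [Fintype β]
    [Nonempty β] {P : β → ℝ} (hP : ∀ y, 0 < P y) {c : β → α → ℝ} (hc : ∀ y x, 0 < c y x)
    {s : ℝ} (hs : 0 ≤ s) :
    IsLeast {v | ∃ (Q : β → ℝ) (K : β → α → ℝ), IsProb Q ∧ (∀ y, IsProb (K y)) ∧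
        v = KL Q P + ∑ y, Q y * (s * KL (K y) (c y))}
      (-log (∑ y, P y * (∑ x, c y x) ^ s)) := by
  set C := fun y => ∑ x, c y x
  have hC : ∀ y, 0 < C y := fun y => sum_pos (fun x _ => hc y x) univ_nonempty
  have hd : ∀ y, 0 < P y * C y ^ s := fun y => mul_pos (hP y) (rpow_pos_of_pos (hC y) s)
  have reduce : ∀ Q, KL Q P + ∑ y, Q y * (s * -log (C y)) = KL Q fun y => P y * C y ^ s := by
    intro Q
    rw [← KL_add_sum_mul_log_div Q (fun y => (hP y).ne') (fun y => (hd y).ne')]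
    simp_rw [div_mul_cancel_left₀ (hP _).ne', log_inv, log_rpow (hC _), mul_neg]
  obtain ⟨Q, hQ, hQv⟩ := (isLeast_KL hd).1
  choose K hK hKv using fun y => (isLeast_KL (hc y)).1
  refine ⟨⟨Q, K, hQ, hK, ?_⟩, ?_⟩
  · simp_rw [← hKv]
    rw [reduce, hQv]
  · rintro v ⟨Q, K, hQ, hK, rfl⟩
    calc -log (∑ y, P y * C y ^ s) ≤ KL Q fun y => P y * C y ^ s :=
          (isLeast_KL hd).2 ⟨Q, hQ, rfl⟩
      _ = KL Q P + ∑ y, Q y * (s * -log (C y)) := (reduce Q).symm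
      _ ≤ KL Q P + ∑ y, Q y * (s * KL (K y) (c y)) := by
          gcongr with y
          · exact hQ.1 y
          · exact (isLeast_KL (hc y)).2 ⟨K y, hK y, rfl⟩

lemma mul_sum_rpow_div_rpow {α : Type*} [Fintype α] {b : α → ℝ} (hb : ∀ x, 0 ≤ b x) {p s : ℝ}
    (hp : 0 < p) (hs : s ≠ 0) :
    p * (∑ x, (b x / p) ^ (1 / s)) ^ s = (∑ x, b x ^ (1 / s)) ^ s := by
  simp_rw [div_rpow (hb _) hp.le, ← sum_div]
  rw [div_rpow (sum_nonneg fun x _ => rpow_nonneg (hb x) _) (rpow_nonneg hp.le _),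
    ← rpow_mul hp.le, one_div_mul_cancel hs, rpow_one, mul_div_cancel₀ _ hp.ne']

lemma mul_log_tilted_eq (k : ℝ) {p py px w l r : ℝ} (hp : 0 < p) (hpy : 0 < py) (hpx : 0 < px)
    (hw : 0 < w) (hl : 0 < 1 + l) :
    k * (log (k / (p / py)) + (r + l) * log (1 / px) + l * log k + r * log w)
      = (1 + l) * (k * log (k / (p * px ^ (r + l) * w ^ (-r) / py) ^ (1 / (1 + l)))) := by
  rcases eq_or_ne k 0 with rfl | hk
  · simp
  have ha : 0 < p * px ^ (r + l) * w ^ (-r) / py := by positivity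
  rw [log_div hk (by positivity), log_div hk (by positivity), log_rpow ha,
    log_div (by positivity : p * px ^ (r + l) * w ^ (-r) ≠ 0) hpy.ne',
    log_mul (by positivity) (by positivity), log_mul hp.ne' (by positivity), log_rpow hpx,
    log_rpow hw, log_div hp.ne' hpy.ne', one_div, log_inv]
  field_simp
  ring

theorem stmt_6_general {𝒳 𝒴 : Type*} [Fintype 𝒳] [Nonempty 𝒳] [Fintype 𝒴] [Nonempty 𝒴]
    (P : 𝒳 × 𝒴 → ℝ) (hPpos : ∀ p, 0 < P p)
    (l r : ℝ) (hl0 : 0 ≤ l)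
    (W : 𝒳 → ℝ) (hWpos : ∀ x, 0 < W x) :
    sInf {v | ∃ (QY : 𝒴 → ℝ) (K : 𝒴 → 𝒳 → ℝ),
        IsProb QY ∧ (∀ y, IsProb (K y)) ∧
        v = KL QY (margY P) + ∑ y, QY y * ∑ x, K y x *
            (Real.log (K y x / (P (x, y) / margY P y))
              + (r + l) * Real.log (1 / margX P x)
              + l * Real.log (K y x) + r * Real.log (W x))}
      = -Real.log (∑ y,
          (∑ x, (P (x, y) * margX P x ^ (r + l) * W x ^ (-r)) ^ (1 / (1 + l)))
            ^ (1 + l)) := by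
  have hl : 0 < 1 + l := by linarith
  have hPY : ∀ y, 0 < margY P y := fun y => sum_pos (fun x _ => hPpos _) univ_nonempty
  have hPX : ∀ x, 0 < margX P x := fun x => sum_pos (fun y _ => hPpos _) univ_nonempty
  have hb : ∀ y x, 0 < P (x, y) * margX P x ^ (r + l) * W x ^ (-r) := fun y x => by
    have := hPpos (x, y); have := hPX x; have := hWpos x; positivity
  simp only [mul_log_tilted_eq _ (hPpos _) (hPY _) (hPX _) (hWpos _) hl, ← mul_sum]
  refine (isLeast_KL_add_sum_mul_KL hPY
    (fun y x => rpow_pos_of_pos (div_pos (hb y x) (hPY y)) _) hl.le).csInf_eq.trans ?_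
  simp_rw [mul_sum_rpow_div_rpow (fun x => (hb _ x).le) (hPY _) hl.ne']

/-- the inner minimization over `Q_Y` and the kernel `Q_{X|Y}`
in the proof of Theorem 1, for a fixed distribution `W`. -/
theorem stmt_6 {𝒳 𝒴 : Type*} [Fintype 𝒳] [Nonempty 𝒳] [Fintype 𝒴] [Nonempty 𝒴]
    (P : 𝒳 × 𝒴 → ℝ) (hP : IsProb P) (hPpos : ∀ p, 0 < P p)
    (l r : ℝ) (hl0 : 0 ≤ l) (hl1 : l ≤ 1) (hr : 0 ≤ r)
    (W : 𝒳 → ℝ) (hW : IsProb W) (hWpos : ∀ x, 0 < W x) :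
    sInf {v | ∃ (QY : 𝒴 → ℝ) (K : 𝒴 → 𝒳 → ℝ),
        IsProb QY ∧ (∀ y, IsProb (K y)) ∧
        v = KL QY (margY P) + ∑ y, QY y * ∑ x, K y x *
            (Real.log (K y x / (P (x, y) / margY P y))
              + (r + l) * Real.log (1 / margX P x)
              + l * Real.log (K y x) + r * Real.log (W x))}
      = -Real.log (∑ y,
          (∑ x, (P (x, y) * margX P x ^ (r + l) * W x ^ (-r)) ^ (1 / (1 + l)))
            ^ (1 + l)) :=
  stmt_6_general P hPpos l r hl0 W hWpos
end

section
/- Let P_XY be a probability distribution on 𝒳×𝒴 with P_XY(x,y) > 0 for all (x,y), with 𝒳-marginal P_X, and fix λ ∈ [0,1] and ρ ≥ 0. Then the function f defined on probability distributions W on 𝒳 with W(x) > 0 for all x by f(W) = −ln( Σ_y [ Σ_x ( P_XY(x,y) · P_X(x)^{ρ+λ} · W(x)^{−ρ} )^{1/(1+λ)} ]^{1+λ} ) is concave: for all such W₀, W₁ and all t ∈ [0,1], f( (1−t)W₀ + tW₁ ) ≥ (1−t) f(W₀) + t f(W₁). -/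
open Finset

/-- The function `f(W)` of Theorem 1's discussion. -/
noncomputable def fGal {𝒳 𝒴 : Type*} [Fintype 𝒳] [Fintype 𝒴]
    (P : 𝒳 × 𝒴 → ℝ) (l r : ℝ) (W : 𝒳 → ℝ) : ℝ :=
  -Real.log (∑ y,
    (∑ x, (P (x, y) * margX P x ^ (r + l) * W x ^ (-r)) ^ (1 / (1 + l))) ^ (1 + l))

/-! With `c_{xy} = P(x,y) P_X(x)^{r+λ}`, the map
`F(W) = ∑_y (∑_x (c_{xy} W_x^{-r})^{1/(1+λ)})^{1+λ}` is log-convex along segments: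
`w ↦ w^{-r}` is log-convex by the weighted AM–GM inequality, positive powers preserve the bound
`F(W_t) ≤ F(W₀)^{1-t} F(W₁)^t`, and so do finite sums by Hölder's inequality in the form
`∑ A^{1-t} B^t ≤ (∑ A)^{1-t} (∑ B)^t`. Hence `f = -log F` is concave. -/

open Real

theorem Finset.sum_rpow_mul_rpow_le {ι : Type*} (s : Finset ι) {f g : ι → ℝ}
    (hf : ∀ i ∈ s, 0 ≤ f i) (hg : ∀ i ∈ s, 0 ≤ g i) {t : ℝ} (ht0 : 0 ≤ t) (ht1 : t ≤ 1) :
    ∑ i ∈ s, f i ^ (1 - t) * g i ^ t ≤ (∑ i ∈ s, f i) ^ (1 - t) * (∑ i ∈ s, g i) ^ t := by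
  rcases ht0.eq_or_lt with rfl | ht0
  · simp
  rcases ht1.eq_or_lt with rfl | ht1
  · simp
  have hHolder := inner_le_Lp_mul_Lq_of_nonneg s (HolderConjugate.one_sub_inv_inv ht0 ht1)
    (fun i hi => rpow_nonneg (hf i hi) (1 - t)) (fun i hi => rpow_nonneg (hg i hi) t)
  simp only [one_div, inv_inv] at hHolder
  convert hHolder using 3 <;> refine sum_congr rfl fun i hi => (rpow_rpow_inv ?_ ?_).symm
  exacts [hf i hi, by linarith, hg i hi, ht0.ne']

theorem Finset.sum_rpow_le_of_le_rpow_mul_rpow {ι : Type*} (s : Finset ι) {a f g : ι → ℝ}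
    (ha : ∀ i ∈ s, 0 ≤ a i) (hf : ∀ i ∈ s, 0 ≤ f i) (hg : ∀ i ∈ s, 0 ≤ g i)
    {p t : ℝ} (hp : 0 ≤ p) (ht0 : 0 ≤ t) (ht1 : t ≤ 1)
    (h : ∀ i ∈ s, a i ≤ f i ^ (1 - t) * g i ^ t) :
    ∑ i ∈ s, a i ^ p ≤ (∑ i ∈ s, f i ^ p) ^ (1 - t) * (∑ i ∈ s, g i ^ p) ^ t :=
  calc ∑ i ∈ s, a i ^ p
      ≤ ∑ i ∈ s, (f i ^ (1 - t) * g i ^ t) ^ p :=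
        sum_le_sum fun i hi => rpow_le_rpow (ha i hi) (h i hi) hp
    _ = ∑ i ∈ s, (f i ^ p) ^ (1 - t) * (g i ^ p) ^ t := by
        refine sum_congr rfl fun i hi => ?_
        rw [mul_rpow (rpow_nonneg (hf i hi) _) (rpow_nonneg (hg i hi) _), ← rpow_mul (hf i hi),
          ← rpow_mul (hg i hi), ← rpow_mul (hf i hi), ← rpow_mul (hg i hi), mul_comm p, mul_comm p]
    _ ≤ _ := sum_rpow_mul_rpow_le s (fun i hi => rpow_nonneg (hf i hi) p)
        (fun i hi => rpow_nonneg (hg i hi) p) ht0 ht1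

theorem mul_rpow_neg_weighted_mean_le {c w₀ w₁ r t : ℝ} (hc : 0 ≤ c) (hw₀ : 0 < w₀) (hw₁ : 0 < w₁)
    (hr : 0 ≤ r) (ht0 : 0 ≤ t) (ht1 : t ≤ 1) :
    c * ((1 - t) * w₀ + t * w₁) ^ (-r) ≤ (c * w₀ ^ (-r)) ^ (1 - t) * (c * w₁ ^ (-r)) ^ t := by
  have hgeom : w₀ ^ (1 - t) * w₁ ^ t ≤ (1 - t) * w₀ + t * w₁ :=
    geom_mean_le_arith_mean2_weighted (by linarith) ht0 hw₀.le hw₁.le (sub_add_cancel 1 t)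
  have hc_split : c ^ (1 - t) * c ^ t = c := by
    rw [← rpow_add' hc (by norm_num), sub_add_cancel, rpow_one]
  calc c * ((1 - t) * w₀ + t * w₁) ^ (-r)
      ≤ c * (w₀ ^ (1 - t) * w₁ ^ t) ^ (-r) :=
        mul_le_mul_of_nonneg_left
          (rpow_le_rpow_of_nonpos (by positivity) hgeom (neg_nonpos.2 hr)) hc
    _ = (c * w₀ ^ (-r)) ^ (1 - t) * (c * w₁ ^ (-r)) ^ t := by
        rw [mul_rpow (by positivity) (by positivity), mul_rpow hc (by positivity),
          mul_rpow hc (by positivity), ← rpow_mul hw₀.le, ← rpow_mul hw₀.le, ← rpow_mul hw₁.le,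
          ← rpow_mul hw₁.le, mul_comm (1 - t), mul_comm t]
        nth_rw 1 [← hc_split]
        ring

theorem neg_log_le_of_le_rpow_mul_rpow {a b c t : ℝ} (ha : 0 < a) (hb : 0 < b) (hc : 0 < c)
    (h : c ≤ a ^ (1 - t) * b ^ t) : (1 - t) * -log a + t * -log b ≤ -log c := by
  have hlog := log_le_log hc h
  rw [log_mul (rpow_pos_of_pos ha _).ne' (rpow_pos_of_pos hb _).ne', log_rpow ha,
    log_rpow hb] at hlog
  linarith

theorem stmt_7_general {𝒳 𝒴 : Type*} [Fintype 𝒳] [Nonempty 𝒳] [Fintype 𝒴] [Nonempty 𝒴]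
    (P : 𝒳 × 𝒴 → ℝ) (hPpos : ∀ p, 0 < P p)
    (l r : ℝ) (hl0 : 0 ≤ l) (hr : 0 ≤ r)
    (W0 W1 : 𝒳 → ℝ) (hW0pos : ∀ x, 0 < W0 x)
    (hW1pos : ∀ x, 0 < W1 x)
    (t : ℝ) (ht0 : 0 ≤ t) (ht1 : t ≤ 1) :
    (1 - t) * fGal P l r W0 + t * fGal P l r W1 ≤
      fGal P l r (fun x => (1 - t) * W0 x + t * W1 x) := by
  have hc : ∀ x y, 0 < P (x, y) * margX P x ^ (r + l) := fun x y =>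
    mul_pos (hPpos _) (rpow_pos_of_pos (sum_pos (fun y _ => hPpos _) univ_nonempty) _)
  have hterm : ∀ W : 𝒳 → ℝ, (∀ x, 0 < W x) → ∀ x y,
      0 < P (x, y) * margX P x ^ (r + l) * W x ^ (-r) :=
    fun W hW x y => mul_pos (hc x y) (rpow_pos_of_pos (hW x) _)
  have hinner : ∀ W : 𝒳 → ℝ, (∀ x, 0 < W x) → ∀ y,
      0 < ∑ x, (P (x, y) * margX P x ^ (r + l) * W x ^ (-r)) ^ (1 / (1 + l)) :=
    fun W hW y => sum_pos (fun x _ => rpow_pos_of_pos (hterm W hW x y) _) univ_nonempty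
  have houter : ∀ W : 𝒳 → ℝ, (∀ x, 0 < W x) → 0 < ∑ y,
      (∑ x, (P (x, y) * margX P x ^ (r + l) * W x ^ (-r)) ^ (1 / (1 + l))) ^ (1 + l) :=
    fun W hW => sum_pos (fun y _ => rpow_pos_of_pos (hinner W hW y) _) univ_nonempty
  have hWt : ∀ x, 0 < (1 - t) * W0 x + t * W1 x := fun x =>
    convex_Ioi (0 : ℝ) (hW0pos x) (hW1pos x) (sub_nonneg.2 ht1) ht0 (sub_add_cancel 1 t)
  refine neg_log_le_of_le_rpow_mul_rpow (houter W0 hW0pos) (houter W1 hW1pos) (houter _ hWt) ?_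
  refine sum_rpow_le_of_le_rpow_mul_rpow univ (fun y _ => (hinner _ hWt y).le)
    (fun y _ => (hinner W0 hW0pos y).le) (fun y _ => (hinner W1 hW1pos y).le) (by linarith)
    ht0 ht1 fun y _ => ?_
  refine sum_rpow_le_of_le_rpow_mul_rpow univ (fun x _ => (hterm _ hWt x y).le)
    (fun x _ => (hterm W0 hW0pos x y).le) (fun x _ => (hterm W1 hW1pos x y).le) (by positivity)
    ht0 ht1 fun x _ => ?_
  exact mul_rpow_neg_weighted_mean_le (hc x y).le (hW0pos x) (hW1pos x) hr ht0 ht1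

/-- `f(W)` is concave in `W`. -/
theorem stmt_7 {𝒳 𝒴 : Type*} [Fintype 𝒳] [Nonempty 𝒳] [Fintype 𝒴] [Nonempty 𝒴]
    (P : 𝒳 × 𝒴 → ℝ) (hP : IsProb P) (hPpos : ∀ p, 0 < P p)
    (l r : ℝ) (hl0 : 0 ≤ l) (hl1 : l ≤ 1) (hr : 0 ≤ r)
    (W0 W1 : 𝒳 → ℝ) (hW0 : IsProb W0) (hW0pos : ∀ x, 0 < W0 x)
    (hW1 : IsProb W1) (hW1pos : ∀ x, 0 < W1 x)
    (t : ℝ) (ht0 : 0 ≤ t) (ht1 : t ≤ 1) :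
    (1 - t) * fGal P l r W0 + t * fGal P l r W1 ≤
      fGal P l r (fun x => (1 - t) * W0 x + t * W1 x) :=
  stmt_7_general P hPpos l r hl0 hr W0 W1 hW0pos hW1pos t ht0 ht1
end

section
/- Let 𝒳 be a nonempty finite set with |𝒳| = M, let G be a transitive group of permutations of 𝒳, and take 𝒴 = G. Let p be a probability distribution on 𝒳 with p(x) > 0 for all x, and define the joint probability distribution P_XY on 𝒳×G by P_XY(x,g) = (1/|G|) · p(g(x)); its 𝒳-marginal P_X is then the uniform distribution on 𝒳 (P_X(x) = 1/M). Fix λ ∈ [0,1] and ρ ≥ 0, and for probability distributions W on 𝒳 with W(x) > 0 for all x define f(W) = −ln( Σ_{g∈G} [ Σ_x ( P_XY(x,g) · P_X(x)^{ρ+λ} · W(x)^{−ρ} )^{1/(1+λ)} ]^{1+λ} ). Then for every such W, f(W) ≤ f(U), where U is the uniform distribution on 𝒳 (U(x) = 1/M); i.e., the uniform distribution maximizes f. -/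
open Finset

/-!
The argument `S(W)` of the logarithm is a convex function of `W` on the positive orthant:
`t ↦ t^{-s}` is convex for `s ≥ 0`, and `t ↦ t^q` is convex and increasing on `[0, ∞)` for
`q ≥ 1`. Since `P_XY(x, g) P_X(x)^{r+l}` depends only on `g x` (the marginal `P_X` being uniform),
`S` is invariant under `W ↦ W ∘ h` for `h ∈ G`. By transitivity the average of the `W ∘ h` over
`G` is the uniform distribution `U`, so Jensen's inequality gives `S(U) ≤ S(W)`, and `-log`
reverses it.
-/

open Real

theorem convexOn_rpow_neg {s : ℝ} (hs : 0 ≤ s) : ConvexOn ℝ (Set.Ioi 0) fun x : ℝ => x ^ (-s) := by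
  refine ⟨convex_Ioi 0, fun x hx y hy a b ha hb hab => ?_⟩
  have hx : 0 < x := hx
  have hy : 0 < y := hy
  -- weighted AM-GM twice: once for `x, y` and once for `x ^ (-s), y ^ (-s)`
  calc (a • x + b • y) ^ (-s) ≤ (x ^ a * y ^ b) ^ (-s) :=
        rpow_le_rpow_of_nonpos (by positivity)
          (geom_mean_le_arith_mean2_weighted ha hb hx.le hy.le hab) (neg_nonpos.2 hs)
    _ = (x ^ (-s)) ^ a * (y ^ (-s)) ^ b := by
        rw [mul_rpow (by positivity) (by positivity), ← rpow_mul hx.le, ← rpow_mul hy.le,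
          ← rpow_mul hx.le, ← rpow_mul hy.le, mul_comm a, mul_comm b]
    _ ≤ a • x ^ (-s) + b • y ^ (-s) :=
        geom_mean_le_arith_mean2_weighted ha hb (by positivity) (by positivity) hab

theorem ConvexOn.fun_sum {E ι : Type*} [AddCommMonoid E] [Module ℝ E] {s : Set E}
    (hs : Convex ℝ s) {t : Finset ι} {f : ι → E → ℝ} (hf : ∀ i ∈ t, ConvexOn ℝ s (f i)) :
    ConvexOn ℝ s fun x => ∑ i ∈ t, f i x := by
  refine ⟨hs, fun x hx y hy a b ha hb hab => ?_⟩
  simp only [smul_eq_mul, mul_sum, ← sum_add_distrib]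
  exact sum_le_sum fun i hi => (hf i hi).2 hx hy ha hb hab

theorem ConvexOn.rpow {E : Type*} [AddCommMonoid E] [Module ℝ E] {s : Set E} {f : E → ℝ}
    (hf : ConvexOn ℝ s f) (hf₀ : ∀ x ∈ s, 0 ≤ f x) {p : ℝ} (hp : 1 ≤ p) :
    ConvexOn ℝ s fun x => f x ^ p := by
  refine ⟨hf.1, fun x hx y hy a b ha hb hab => ?_⟩
  calc f (a • x + b • y) ^ p ≤ (a • f x + b • f y) ^ p :=
        rpow_le_rpow (hf₀ _ (hf.1 hx hy ha hb hab)) (hf.2 hx hy ha hb hab) (by linarith)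
    _ ≤ a • f x ^ p + b • f y ^ p :=
        (convexOn_rpow hp).2 (hf₀ x hx) (hf₀ y hy) ha hb hab

section OrbitSum

variable (G : Type*) {X : Type*} [Group G] [Fintype G] [MulAction G X] [Fintype X]

theorem average_smul_eq_average_of_isPretransitive [MulAction.IsPretransitive G X]
    (φ : X → ℝ) (x : X) :
    (Fintype.card G : ℝ)⁻¹ * ∑ g : G, φ (g • x) = (Fintype.card X : ℝ)⁻¹ * ∑ y, φ y := by
  have hconst : ∀ x', ∑ g : G, φ (g • x') = ∑ g : G, φ (g • x) := by
    intro x'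
    obtain ⟨h, rfl⟩ := MulAction.exists_smul_eq G x x'
    simp_rw [smul_smul]
    exact Equiv.sum_comp (Equiv.mulRight h) fun g => φ (g • x)
  have htotal : ∑ x', ∑ g : G, φ (g • x') = Fintype.card G * ∑ y, φ y := by
    have hperm (g : G) : ∑ x', φ (g • x') = ∑ y, φ y := Equiv.sum_comp (MulAction.toPerm g) φ
    rw [sum_comm, sum_congr rfl fun g _ => hperm g, sum_const,
      card_univ, nsmul_eq_mul]
  have hG : (Fintype.card G : ℝ) ≠ 0 := Nat.cast_ne_zero.2 Fintype.card_ne_zero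
  have hX : (Fintype.card X : ℝ) ≠ 0 := Nat.cast_ne_zero.2 (Fintype.card_pos_iff.2 ⟨x⟩).ne'
  rw [sum_congr rfl fun x' _ => hconst x', sum_const, card_univ, nsmul_eq_mul] at htotal
  field_simp
  linarith

theorem ConvexOn.map_uniform_average_le [MulAction.IsPretransitive G X] [Nonempty X]
    {S : Set (X → ℝ)} {F : (X → ℝ) → ℝ} (hF : ConvexOn ℝ S F) {W : X → ℝ}
    (hinv : ∀ h : G, F (fun x => W (h • x)) = F W) (hS : ∀ h : G, (fun x => W (h • x)) ∈ S) :
    F (fun _ => (Fintype.card X : ℝ)⁻¹ * ∑ y, W y) ≤ F W := by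
  have havg : (fun _ => (Fintype.card X : ℝ)⁻¹ * ∑ y, W y) =
      ∑ h : G, (Fintype.card G : ℝ)⁻¹ • fun x => W (h • x) := by
    funext x
    simp only [Finset.sum_apply, Pi.smul_apply, smul_eq_mul, ← mul_sum,
      average_smul_eq_average_of_isPretransitive G W x]
  calc F (fun _ => (Fintype.card X : ℝ)⁻¹ * ∑ y, W y)
      ≤ ∑ h : G, (Fintype.card G : ℝ)⁻¹ • F (fun x => W (h • x)) := by
        rw [havg]
        exact hF.map_sum_le (fun _ _ => by positivity) (by simp) fun h _ => hS h
    _ = F W := by simp [hinv]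

/-- With `b = c ^ (1/q)` and `s = r/q` this is `∑_g (∑_x (c (g • x) V(x)^{-r})^{1/q})^q`:
the argument of the logarithm in the theorem once `P_XY(x, g) P_X(x)^{r+l}` is written as
`c (g • x)`. -/
noncomputable def orbitRpowSum (b : X → ℝ) (s q : ℝ) (V : X → ℝ) : ℝ :=
  ∑ g : G, (∑ x, b (g • x) * V x ^ (-s)) ^ q

theorem orbitRpowSum_comp_smul (b : X → ℝ) (s q : ℝ) (V : X → ℝ) (h : G) :
    orbitRpowSum G b s q (fun x => V (h • x)) = orbitRpowSum G b s q V := by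
  have hinner (g : G) :
      ∑ x, b (g • x) * V (h • x) ^ (-s) = ∑ y, b ((g * h⁻¹) • y) * V y ^ (-s) := by
    rw [← Equiv.sum_comp (MulAction.toPerm h⁻¹)]
    simp only [MulAction.toPerm_apply, smul_inv_smul, mul_smul]
  simp only [orbitRpowSum, hinner]
  exact Equiv.sum_comp (Equiv.mulRight h⁻¹) fun g => (∑ y, b (g • y) * V y ^ (-s)) ^ q

theorem convexOn_orbitRpowSum {b : X → ℝ} (hb : ∀ x, 0 ≤ b x) {s q : ℝ} (hs : 0 ≤ s)
    (hq : 1 ≤ q) : ConvexOn ℝ (Set.univ.pi fun _ => Set.Ioi 0) (orbitRpowSum G b s q) := by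
  have hP : Convex ℝ (Set.univ.pi fun _ : X => Set.Ioi (0 : ℝ)) := convex_pi fun _ _ => convex_Ioi 0
  have hcoord (x : X) : ConvexOn ℝ (Set.univ.pi fun _ => Set.Ioi 0) fun V : X → ℝ => V x ^ (-s) :=
    ((convexOn_rpow_neg hs).comp_linearMap (LinearMap.proj (R := ℝ) (φ := fun _ : X => ℝ) x)).subset
      (fun V hV => Set.mem_univ_pi.1 hV x) hP
  have hinner (g : G) :
      ConvexOn ℝ (Set.univ.pi fun _ => Set.Ioi 0) fun V => ∑ x, b (g • x) * V x ^ (-s) :=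
    ConvexOn.fun_sum hP fun x _ => (hcoord x).smul (hb _)
  refine ConvexOn.fun_sum hP fun g _ => (hinner g).rpow (fun V hV => ?_) hq
  exact sum_nonneg fun x _ => mul_nonneg (hb _) (rpow_nonneg (Set.mem_univ_pi.1 hV x).le _)

end OrbitSum

attribute [local instance] Classical.propDecidable

theorem stmt_8_general {𝒳 : Type*} [Fintype 𝒳] [DecidableEq 𝒳] [Nonempty 𝒳]
    (G : Subgroup (Equiv.Perm 𝒳))
    (hTrans : ∀ x x' : 𝒳, ∃ g ∈ G, g x = x')
    (p : 𝒳 → ℝ) (hp : IsProb p) (hppos : ∀ x, 0 < p x)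
    (l r : ℝ) (hl0 : 0 ≤ l) (hr : 0 ≤ r)
    (PXY : 𝒳 × G → ℝ)
    (hPXY : PXY = fun q => (1 / (Fintype.card G : ℝ)) * p ((q.2 : Equiv.Perm 𝒳) q.1))
    (PX : 𝒳 → ℝ) (hPX : PX = margX PXY)
    (f : (𝒳 → ℝ) → ℝ)
    (hf : f = fun W => -Real.log (∑ g : G,
        (∑ x, (PXY (x, g) * PX x ^ (r + l) * W x ^ (-r)) ^ (1 / (1 + l))) ^ (1 + l)))
    (W : 𝒳 → ℝ) (hW : IsProb W) (hWpos : ∀ x, 0 < W x) :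
    f W ≤ f (fun _ => 1 / (Fintype.card 𝒳 : ℝ)) := by
  have : MulAction.IsPretransitive G 𝒳 :=
    ⟨fun x x' => let ⟨g, hg, hgx⟩ := hTrans x x'; ⟨⟨g, hg⟩, hgx⟩⟩
  set U : 𝒳 → ℝ := fun _ => 1 / (Fintype.card 𝒳 : ℝ)
  set w : ℝ := 1 / (Fintype.card G : ℝ)
  have hPXU : PX = U := by
    funext x
    have h := average_smul_eq_average_of_isPretransitive G p x
    rw [hp.2, mul_one] at h
    simp only [hPX, margX, hPXY, U, w, one_div, ← mul_sum]
    exact h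
  set b : 𝒳 → ℝ := fun y => (w * p y * U y ^ (r + l)) ^ (1 / (1 + l))
  have hb (y : 𝒳) : 0 < b y := by have := hppos y; positivity
  set S := orbitRpowSum G b (r / (1 + l)) (1 + l)
  have hfS (V : 𝒳 → ℝ) (hV : ∀ x, 0 < V x) : f V = -Real.log (S V) := by
    rw [hf, hPXU, hPXY]
    refine congrArg (fun t => -Real.log t) (sum_congr rfl fun g _ => ?_)
    refine congrArg (· ^ (1 + l)) (sum_congr rfl fun x _ => ?_)
    have := hppos (g • x)
    rw [mul_rpow (by positivity) (rpow_nonneg (hV x).le _), ← rpow_mul (hV x).le, neg_mul,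
      mul_one_div]
    rfl
  have hle : S U ≤ S W := by
    have hconv := convexOn_orbitRpowSum G (fun y => (hb y).le) (s := r / (1 + l)) (q := 1 + l)
      (by positivity) (by linarith)
    have h := hconv.map_uniform_average_le G (orbitRpowSum_comp_smul G b _ _ W)
      fun h => Set.mem_univ_pi.2 fun x => hWpos _
    rwa [hW.2, mul_one, ← one_div] at h
  have hpos : 0 < S U :=
    sum_pos (fun g _ => rpow_pos_of_pos (sum_pos (fun x _ => by have := hb (g • x); positivity)
      univ_nonempty) _) univ_nonempty
  rw [hfS W hWpos, hfS U fun _ => by positivity]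
  exact neg_le_neg (Real.log_le_log hpos hle)

/-- symmetry — for a transitive permutation group `G` acting on `𝒳`,
the joint distribution `P_XY(x,g) = p(g(x))/|G|` (whose 𝒳-marginal `P_X` is then
uniform), the uniform distribution `U` maximizes `f(W)`. -/
theorem stmt_8 {𝒳 : Type*} [Fintype 𝒳] [DecidableEq 𝒳] [Nonempty 𝒳]
    (G : Subgroup (Equiv.Perm 𝒳))
    (hTrans : ∀ x x' : 𝒳, ∃ g ∈ G, g x = x')
    (p : 𝒳 → ℝ) (hp : IsProb p) (hppos : ∀ x, 0 < p x)
    (l r : ℝ) (hl0 : 0 ≤ l) (hl1 : l ≤ 1) (hr : 0 ≤ r)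
    (PXY : 𝒳 × G → ℝ)
    (hPXY : PXY = fun q => (1 / (Fintype.card G : ℝ)) * p ((q.2 : Equiv.Perm 𝒳) q.1))
    (PX : 𝒳 → ℝ) (hPX : PX = margX PXY)
    (f : (𝒳 → ℝ) → ℝ)
    (hf : f = fun W => -Real.log (∑ g : G,
        (∑ x, (PXY (x, g) * PX x ^ (r + l) * W x ^ (-r)) ^ (1 / (1 + l))) ^ (1 + l)))
    (W : 𝒳 → ℝ) (hW : IsProb W) (hWpos : ∀ x, 0 < W x) :
    f W ≤ f (fun _ => 1 / (Fintype.card 𝒳 : ℝ)) :=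
  stmt_8_general G hTrans p hp hppos l r hl0 hr PXY hPXY PX hPX f hf W hW hWpos
end

section
/- Let P_XY be a probability distribution on 𝒳×𝒴 with P_XY(x,y) > 0 for all (x,y), and let R be any real number. Then the minimum over all joint probability distributions Q_XY on 𝒳×𝒴 of { D(Q_XY‖P_XY) + [ R − H_Q(X|Y) ]_+ } equals the maximum over ρ ∈ [0,1] of { −ln( Σ_y ( Σ_x P_XY(x,y)^{1/(1+ρ)} )^{1+ρ} ) + ρR }. -/
/-!
Two applications of the log-sum inequality (over `x` for each `y`, then over `y`) give
`KL(Q‖P) - r H_Q(X|Y) ≥ -log Z(r)` for every `Q` and every `r > -1`, where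
`Z(r) = Σ_y (Σ_x P(x,y)^{1/(1+r)})^{1+r}`; since `r t ≤ [t]_+` for `r ∈ [0,1]`, every value on the
right is at most every value on the left. Both log-sum steps are equalities at the tilted
distribution `Q_r(x,y) ∝ P(x,y)^{1/(1+r)} (Σ_x' P(x',y)^{1/(1+r)})^r`, and `r ↦ H_{Q_r}(X|Y)` is
continuous, so the intermediate value theorem yields `ρ ∈ [0,1]` with
`[R - H_{Q_ρ}(X|Y)]_+ = ρ (R - H_{Q_ρ}(X|Y))`: the pair `(Q_ρ, ρ)` is a saddle point.
-/

open Finset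

open Real

theorem log_sum_inequality {ι : Type*} (s : Finset ι) (a b : ι → ℝ)
    (ha : ∀ i ∈ s, 0 ≤ a i) (hb : ∀ i ∈ s, 0 < b i) :
    (∑ i ∈ s, a i) * log ((∑ i ∈ s, a i) / ∑ i ∈ s, b i) ≤
      ∑ i ∈ s, a i * log (a i / b i) := by
  rcases s.eq_empty_or_nonempty with rfl | hs
  · simp
  set B := ∑ i ∈ s, b i
  have hB : 0 < B := sum_pos hb hs
  have jensen := convexOn_mul_log.map_sum_le (t := s) (w := fun i => b i / B)
    (p := fun i => a i / b i) (fun i hi => (div_pos (hb i hi) hB).le)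
    (by rw [← sum_div, div_self hB.ne'])
    (fun i hi => Set.mem_Ici.2 (div_nonneg (ha i hi) (hb i hi).le))
  have hcancel (f : ι → ℝ) : ∑ i ∈ s, b i * (f i / b i) = ∑ i ∈ s, f i :=
    sum_congr rfl fun i hi => mul_div_cancel₀ _ (hb i hi).ne'
  simp only [smul_eq_mul, ← sum_div, div_mul_eq_mul_div, hcancel] at jensen
  rwa [div_le_div_iff_of_pos_right hB] at jensen

theorem mul_log_div_sum_rpow_le {ι : Type*} [Fintype ι] {q p : ι → ℝ}
    (hq : ∀ i, 0 ≤ q i) (hp : ∀ i, 0 < p i) {r : ℝ} (hr : 0 < 1 + r) :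
    (∑ i, q i) * log ((∑ i, q i) / (∑ i, p i ^ (1 / (1 + r))) ^ (1 + r)) ≤
      ∑ i, q i * log (q i / p i) + r * ∑ i, q i * log (q i / ∑ j, q j) := by
  set m := ∑ i, q i
  set A := ∑ i, p i ^ (1 / (1 + r))
  have hpow (i : ι) : 0 < p i ^ (1 / (1 + r)) := rpow_pos_of_pos (hp i) _
  have hterm (i : ι) : q i * log (q i / p i) + r * (q i * log (q i / m)) =
      (1 + r) * (q i * log (q i / p i ^ (1 / (1 + r)))) - r * (q i * log m) := by
    rcases (hq i).eq_or_lt with hqi | hqi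
    · simp [← hqi]
    have hm : 0 < m := hqi.trans_le (single_le_sum (fun j _ => hq j) (mem_univ i))
    rw [log_div hqi.ne' (hp i).ne', log_div hqi.ne' hm.ne', log_div hqi.ne' (hpow i).ne',
      log_rpow (hp i)]
    field_simp
    ring
  have hlhs : m * log (m / A ^ (1 + r)) = (1 + r) * (m * log (m / A)) - r * (m * log m) := by
    have hm : 0 ≤ m := sum_nonneg fun i _ => hq i
    rcases hm.eq_or_lt with hm | hm
    · rw [← hm]; simp
    have hA : 0 < A := sum_pos (fun i _ => hpow i) (nonempty_of_sum_ne_zero hm.ne')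
    rw [log_div hm.ne' (rpow_pos_of_pos hA _).ne', log_rpow hA, log_div hm.ne' hA.ne']
    ring
  calc m * log (m / A ^ (1 + r))
      = (1 + r) * (m * log (m / A)) - r * (m * log m) := hlhs
    _ ≤ (1 + r) * ∑ i, q i * log (q i / p i ^ (1 / (1 + r))) - r * (m * log m) := by
      gcongr
      exact log_sum_inequality _ _ _ (fun i _ => hq i) (fun i _ => hpow i)
    _ = ∑ i, q i * log (q i / p i) + r * ∑ i, q i * log (q i / m) := by
      have hsum := sum_congr rfl fun i (_ : i ∈ univ) => hterm i
      simp only [sum_add_distrib, sum_sub_distrib, ← mul_sum, ← sum_mul] at hsum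
      linarith

section Gallager

variable {𝒳 𝒴 : Type*} [Fintype 𝒳]

noncomputable def powSum (P : 𝒳 × 𝒴 → ℝ) (r : ℝ) (y : 𝒴) : ℝ :=
  ∑ x, P (x, y) ^ (1 / (1 + r))

theorem powSum_pos [Nonempty 𝒳] {P : 𝒳 × 𝒴 → ℝ} {r : ℝ} (hP : ∀ p, 0 < P p) (y : 𝒴) :
    0 < powSum P r y :=
  sum_pos (fun _ _ => rpow_pos_of_pos (hP _) _) univ_nonempty

variable [Fintype 𝒴]

noncomputable def gallagerSum (P : 𝒳 × 𝒴 → ℝ) (r : ℝ) : ℝ :=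
  ∑ y, powSum P r y ^ (1 + r)

/-- The distribution at which both log-sum inequalities behind `neg_log_gallagerSum_le` are
equalities. -/
noncomputable def tilted (P : 𝒳 × 𝒴 → ℝ) (r : ℝ) : 𝒳 × 𝒴 → ℝ :=
  fun p => P p ^ (1 / (1 + r)) * powSum P r p.2 ^ r / gallagerSum P r

variable {P : 𝒳 × 𝒴 → ℝ} {r : ℝ}

theorem sum_margY {Q : 𝒳 × 𝒴 → ℝ} : ∑ y, margY Q y = ∑ p, Q p := by
  rw [Fintype.sum_prod_type, sum_comm]
  rfl

theorem condEnt_eq_sum (Q : 𝒳 × 𝒴 → ℝ) :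
    condEnt Q = -∑ p, Q p * log (Q p / margY Q p.2) := by
  rw [condEnt, Fintype.sum_prod_type]

theorem gallagerSum_pos [Nonempty 𝒳] [Nonempty 𝒴] (hP : ∀ p, 0 < P p) : 0 < gallagerSum P r :=
  sum_pos (fun y _ => rpow_pos_of_pos (powSum_pos hP y) _) univ_nonempty

theorem neg_log_gallagerSum_le [Nonempty 𝒳] (hP : ∀ p, 0 < P p) {Q : 𝒳 × 𝒴 → ℝ}
    (hQ : IsProb Q) (hr : 0 < 1 + r) :
    -log (gallagerSum P r) ≤ KL Q P - r * condEnt Q := by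
  have hY : ∑ y, margY Q y = 1 := sum_margY.trans hQ.2
  calc -log (gallagerSum P r)
      = (∑ y, margY Q y) * log ((∑ y, margY Q y) / gallagerSum P r) := by
        rw [hY, one_mul, one_div, log_inv]
    _ ≤ ∑ y, margY Q y * log (margY Q y / powSum P r y ^ (1 + r)) :=
        log_sum_inequality _ _ _ (fun y _ => sum_nonneg fun x _ => hQ.1 _)
          (fun y _ => rpow_pos_of_pos (powSum_pos hP y) _)
    _ ≤ ∑ y, (∑ x, Q (x, y) * log (Q (x, y) / P (x, y)) +
          r * ∑ x, Q (x, y) * log (Q (x, y) / margY Q y)) :=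
        sum_le_sum fun y _ => mul_log_div_sum_rpow_le (fun _ => hQ.1 _) (fun _ => hP _) hr
    _ = KL Q P - r * condEnt Q := by
        rw [KL, condEnt, Fintype.sum_prod_type, sum_add_distrib, ← mul_sum, mul_neg,
          sub_neg_eq_add]
        congr 1 <;> [exact sum_comm; rw [sum_comm]]

theorem margY_tilted [Nonempty 𝒳] (hP : ∀ p, 0 < P p) (y : 𝒴) :
    margY (tilted P r) y = powSum P r y ^ (1 + r) / gallagerSum P r := by
  simp only [margY, tilted]
  rw [← sum_div, ← sum_mul, rpow_add (powSum_pos hP y), rpow_one]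
  rfl

theorem tilted_pos [Nonempty 𝒳] [Nonempty 𝒴] (hP : ∀ p, 0 < P p) (p : 𝒳 × 𝒴) :
    0 < tilted P r p :=
  div_pos (mul_pos (rpow_pos_of_pos (hP p) _) (rpow_pos_of_pos (powSum_pos hP p.2) _))
    (gallagerSum_pos hP)

theorem isProb_tilted [Nonempty 𝒳] [Nonempty 𝒴] (hP : ∀ p, 0 < P p) : IsProb (tilted P r) := by
  refine ⟨fun p => (tilted_pos hP p).le, ?_⟩
  rw [← sum_margY, sum_congr rfl fun y _ => margY_tilted hP y, ← sum_div]
  exact div_self (gallagerSum_pos hP).ne'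

theorem kl_tilted_sub_mul_condEnt [Nonempty 𝒳] [Nonempty 𝒴] (hP : ∀ p, 0 < P p)
    (hr : 1 + r ≠ 0) :
    KL (tilted P r) P - r * condEnt (tilted P r) = -log (gallagerSum P r) := by
  have hterm (p : 𝒳 × 𝒴) : tilted P r p * log (tilted P r p / P p) +
      r * (tilted P r p * log (tilted P r p / margY (tilted P r) p.2)) =
      tilted P r p * -log (gallagerSum P r) := by
    have hA := powSum_pos (r := r) hP p.2
    have hZ := gallagerSum_pos (r := r) hP
    have hQ := tilted_pos (r := r) hP p
    have hlogQ : log (tilted P r p) =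
        1 / (1 + r) * log (P p) + r * log (powSum P r p.2) - log (gallagerSum P r) := by
      rw [tilted, log_div (mul_pos (rpow_pos_of_pos (hP p) _) (rpow_pos_of_pos hA _)).ne' hZ.ne',
        log_mul (rpow_pos_of_pos (hP p) _).ne' (rpow_pos_of_pos hA _).ne',
        log_rpow (hP p), log_rpow hA]
    have hlogM : log (margY (tilted P r) p.2) =
        (1 + r) * log (powSum P r p.2) - log (gallagerSum P r) := by
      rw [margY_tilted hP, log_div (by positivity) hZ.ne', log_rpow hA]
    rw [log_div hQ.ne' (hP p).ne', log_div hQ.ne' ?_, hlogQ, hlogM]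
    · field_simp
      ring
    · rw [margY_tilted hP]
      positivity
  rw [KL, condEnt_eq_sum, mul_neg, sub_neg_eq_add, mul_sum, ← sum_add_distrib,
    sum_congr rfl fun p _ => hterm p, ← sum_mul, (isProb_tilted hP).2, one_mul]

theorem continuousOn_condEnt {α : Type*} [TopologicalSpace α] {Q : α → 𝒳 × 𝒴 → ℝ} {s : Set α}
    (hc : ∀ p, ContinuousOn (fun a => Q a p) s)
    (hpos : ∀ a ∈ s, ∀ p, 0 < Q a p) : ContinuousOn (fun a => condEnt (Q a)) s := by
  have hmarg (a) (ha : a ∈ s) (x : 𝒳) (y : 𝒴) : 0 < margY (Q a) y :=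
    sum_pos (fun x _ => hpos a ha _) ⟨x, mem_univ x⟩
  refine (continuousOn_finsetSum _ fun x _ => continuousOn_finsetSum _ fun y _ => ?_).neg
  refine (hc _).mul (ContinuousOn.log ((hc _).div
    (continuousOn_finsetSum _ fun _ _ => hc _) fun a ha => (hmarg a ha x y).ne') fun a ha => ?_)
  exact (div_pos (hpos a ha _) (hmarg a ha x y)).ne'

theorem continuousOn_tilted [Nonempty 𝒳] [Nonempty 𝒴] (hP : ∀ p, 0 < P p) (p : 𝒳 × 𝒴) :
    ContinuousOn (fun r => tilted P r p) (Set.Ioi (-1)) := by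
  have hexp : ContinuousOn (fun r : ℝ => 1 / (1 + r)) (Set.Ioi (-1)) :=
    continuousOn_const.div (by fun_prop) fun r hr => by simp at hr; linarith
  have hpow (q : 𝒳 × 𝒴) : ContinuousOn (fun r : ℝ => P q ^ (1 / (1 + r))) (Set.Ioi (-1)) :=
    continuousOn_const.rpow hexp fun _ _ => Or.inl (hP q).ne'
  have hsum (y : 𝒴) : ContinuousOn (fun r => powSum P r y) (Set.Ioi (-1)) :=
    continuousOn_finsetSum _ fun x _ => hpow (x, y)
  have hsum_rpow {e : ℝ → ℝ} (he : ContinuousOn e (Set.Ioi (-1))) (y : 𝒴) :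
      ContinuousOn (fun r => powSum P r y ^ e r) (Set.Ioi (-1)) :=
    (hsum y).rpow he fun _ _ => Or.inl (powSum_pos hP y).ne'
  exact ((hpow p).mul (hsum_rpow continuousOn_id p.2)).div
    (continuousOn_finsetSum _ fun y _ => hsum_rpow (continuousOn_const.add continuousOn_id) y)
    fun _ _ => (gallagerSum_pos hP).ne'

end Gallager

theorem exists_mem_Icc_max_sub_zero_eq_mul {f : ℝ → ℝ} (hf : ContinuousOn f (Set.Icc 0 1))
    (R : ℝ) : ∃ ρ ∈ Set.Icc (0 : ℝ) 1, max (R - f ρ) 0 = ρ * (R - f ρ) := by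
  by_cases h0 : R ≤ f 0
  · exact ⟨0, by simp, by simp [h0]⟩
  by_cases h1 : f 1 ≤ R
  · exact ⟨1, by simp, by simp [h1]⟩
  push Not at h0 h1
  obtain ⟨ρ, hρ, hfρ⟩ := intermediate_value_Icc zero_le_one hf ⟨h0.le, h1.le⟩
  exact ⟨ρ, hρ, by simp [hfρ]⟩

theorem csInf_eq_csSup_of_forall_le {α : Type*} [ConditionallyCompleteLattice α] {S T : Set α}
    {a : α} (h : ∀ v ∈ S, ∀ w ∈ T, w ≤ v) (haS : a ∈ S) (haT : a ∈ T) : sInf S = sSup T :=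
  (IsLeast.csInf_eq ⟨haS, fun v hv => h v hv a haT⟩).trans
    (IsGreatest.csSup_eq ⟨haT, fun w hw => h a haS w hw⟩).symm

theorem stmt_9_general {𝒳 𝒴 : Type*} [Fintype 𝒳] [Nonempty 𝒳] [Fintype 𝒴] [Nonempty 𝒴]
    (P : 𝒳 × 𝒴 → ℝ) (hPpos : ∀ p, 0 < P p) (R : ℝ) :
    sInf {v | ∃ Q : 𝒳 × 𝒴 → ℝ, IsProb Q ∧
        v = KL Q P + max (R - condEnt Q) 0}
      = sSup {v | ∃ r : ℝ, 0 ≤ r ∧ r ≤ 1 ∧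
          v = -Real.log (∑ y, (∑ x, P (x, y) ^ (1 / (1 + r))) ^ (1 + r)) + r * R} := by
  have hcont : ContinuousOn (fun r => condEnt (tilted P r)) (Set.Icc 0 1) :=
    (continuousOn_condEnt (continuousOn_tilted hPpos) fun r _ p => tilted_pos hPpos p).mono
      fun r hr => show (-1 : ℝ) < r by linarith [hr.1]
  obtain ⟨ρ, ⟨hρ0, hρ1⟩, hmax⟩ := exists_mem_Icc_max_sub_zero_eq_mul hcont R
  refine csInf_eq_csSup_of_forall_le ?_ ⟨tilted P ρ, isProb_tilted hPpos, rfl⟩ ⟨ρ, hρ0, hρ1, ?_⟩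
  · rintro _ ⟨Q, hQ, rfl⟩ _ ⟨r, hr0, hr1, rfl⟩
    have hgibbs := neg_log_gallagerSum_le (r := r) hPpos hQ (by linarith)
    have hmul_le_max : r * (R - condEnt Q) ≤ max (R - condEnt Q) 0 := by
      rcases le_total 0 (R - condEnt Q) with h | h
      · exact (mul_le_of_le_one_left h hr1).trans (le_max_left _ _)
      · exact (mul_nonpos_of_nonneg_of_nonpos hr0 h).trans (le_max_right _ _)
    change -log (gallagerSum P r) + r * R ≤ _
    linarith
  · have := kl_tilted_sub_mul_condEnt (r := ρ) hPpos (by linarith)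
    change _ = -log (gallagerSum P ρ) + ρ * R
    linarith

/-- Csiszár-style = Gallager-style form of the fixed-rate
Slepian–Wolf random-coding error exponent. -/
theorem stmt_9 {𝒳 𝒴 : Type*} [Fintype 𝒳] [Nonempty 𝒳] [Fintype 𝒴] [Nonempty 𝒴]
    (P : 𝒳 × 𝒴 → ℝ) (hP : IsProb P) (hPpos : ∀ p, 0 < P p) (R : ℝ) :
    sInf {v | ∃ Q : 𝒳 × 𝒴 → ℝ, IsProb Q ∧
        v = KL Q P + max (R - condEnt Q) 0}
      = sSup {v | ∃ r : ℝ, 0 ≤ r ∧ r ≤ 1 ∧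
          v = -Real.log (∑ y, (∑ x, P (x, y) ^ (1 / (1 + r))) ^ (1 + r)) + r * R} :=
  stmt_9_general P hPpos R
end
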